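/- Let θ be a non-constant inner function and φ ∈ L². Then the truncated Hankel operator H^θ_φ is the zero operator (on the dense subset K_θ ∩ H^∞ of K_θ) if and only if φ is constant almost everywhere on the circle. -/

import Mathlib

open MeasureTheory Filter Topology ComplexConjugate ENNReal

noncomputable section

namespace HTTO

instance fact2pi : Fact (0 < 2 * Real.pi) := ⟨Real.two_pi_pos⟩

/-- The unit circle, modeled additively as `ℝ / 2πℤ`; the point `x` corresponds to `e^{ix}`. -/
abbrev Circ : Type := AddCircle (2 * Real.pi)

/-- Normalized Haar (Lebesgue) measure on the circle. -/
abbrev hm : Measure Circ := AddCircle.haarAddCircle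

/-- The Lebesgue space `L²` of the circle. -/
abbrev L2 : Type := Lp ℂ 2 hm

/-- The Lebesgue space `L^∞` of the circle. -/
abbrev Linf : Type := Lp ℂ ⊤ hm

/-- The `n`-th Fourier coefficient, as a continuous linear functional on `L²`. -/
def coeffCLM (n : ℤ) : L2 →L[ℂ] ℂ :=
  LinearMap.mkContinuous
    { toFun := fun f => fourierBasis.repr f n
      map_add' := fun f g => by simp
      map_smul' := fun c f => by simp }
    1
    (fun f => by
      rw [one_mul]
      calc ‖fourierBasis.repr f n‖ ≤ ‖fourierBasis.repr f‖ :=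
            lp.norm_apply_le_norm (by norm_num) _ n
        _ = ‖f‖ := by simp)

/-- The Hardy space `H²`: the subspace of `L²` of functions whose negative Fourier
coefficients vanish. -/
def H2 : Submodule ℂ L2 := ⨅ n : {m : ℤ // m < 0}, LinearMap.ker (coeffCLM n.1 : L2 →ₗ[ℂ] ℂ)

theorem isClosed_H2 : IsClosed (H2 : Set L2) := by
  have h : ((H2 : Submodule ℂ L2) : Set L2)
      = ⋂ n : {m : ℤ // m < 0}, ↑(LinearMap.ker (coeffCLM n.1 : L2 →ₗ[ℂ] ℂ)) := Submodule.coe_iInf _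
  rw [h]
  exact isClosed_iInter fun n => ContinuousLinearMap.isClosed_ker _

instance : CompleteSpace H2 := isClosed_H2.completeSpace_coe

/-- The orthogonal (Szegő/Riesz) projection `P` of `L²` onto `H²`,
as an endomorphism of `L²`. -/
def Pp : L2 →L[ℂ] L2 := H2.subtypeL.comp (H2.orthogonalProjectionOnto)

/-- The `L²` function `f * g`, for `f ∈ L^∞` and `g ∈ L²`, is in `L²`. -/
theorem mulMem (f : Linf) (g : L2) : MemLp (⇑f • ⇑g) 2 hm :=
  (Lp.memLp g).smul (Lp.memLp f)

/-- Pointwise multiplication `g ↦ f g` of an `L²` function by an `L^∞` function. -/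
def mulFun (f : Linf) (g : L2) : L2 := (mulMem f g).toLp (⇑f • ⇑g)

theorem coeFn_mulFun (f : Linf) (g : L2) : mulFun f g =ᵐ[hm] ⇑f • ⇑g :=
  MemLp.coeFn_toLp _

theorem mulFun_add (f : Linf) (g₁ g₂ : L2) :
    mulFun f (g₁ + g₂) = mulFun f g₁ + mulFun f g₂ := by
  apply Lp.ext
  filter_upwards [coeFn_mulFun f (g₁ + g₂), coeFn_mulFun f g₁, coeFn_mulFun f g₂,
    Lp.coeFn_add (mulFun f g₁) (mulFun f g₂), Lp.coeFn_add g₁ g₂] with x h1 h2 h3 h4 h5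
  simp only [h1, h4, Pi.add_apply, h2, h3, Pi.smul_apply, h5, smul_eq_mul, Pi.mul_apply, mul_add]

theorem mulFun_smul (f : Linf) (c : ℂ) (g : L2) :
    mulFun f (c • g) = c • mulFun f g := by
  apply Lp.ext
  filter_upwards [coeFn_mulFun f (c • g), coeFn_mulFun f g,
    Lp.coeFn_smul c (mulFun f g), Lp.coeFn_smul c g] with x h1 h2 h3 h4
  simp only [h1, h3, Pi.smul_apply, h2, h4, smul_eq_mul, Pi.mul_apply]
  ring

theorem mulFun_norm (f : Linf) (g : L2) : ‖mulFun f g‖ ≤ ‖f‖ * ‖g‖ := by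
  rw [mulFun, Lp.norm_toLp]
  calc (eLpNorm (⇑f • ⇑g) 2 hm).toReal
      ≤ (eLpNorm (⇑f) ⊤ hm * eLpNorm (⇑g) 2 hm).toReal :=
        ENNReal.toReal_mono
          (ENNReal.mul_ne_top (Lp.eLpNorm_ne_top f) (Lp.eLpNorm_ne_top g))
          (eLpNorm_smul_le_eLpNorm_top_mul_eLpNorm 2 (Lp.aestronglyMeasurable g) ⇑f)
    _ = ‖f‖ * ‖g‖ := by rw [ENNReal.toReal_mul]; rfl

/-- The multiplication operator `M_f : L² → L²`, `g ↦ f g`, for a symbol `f ∈ L^∞`. -/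
def mulCL (f : Linf) : L2 →L[ℂ] L2 :=
  LinearMap.mkContinuous
    { toFun := mulFun f
      map_add' := mulFun_add f
      map_smul' := mulFun_smul f }
    ‖f‖ (mulFun_norm f)

/-- The product of two `L^∞` functions, as an element of `L^∞`. -/
def mulInf (f g : Linf) : Linf :=
  ((Lp.memLp g).smul (r := ⊤) (Lp.memLp f)).toLp (⇑f • ⇑g)

/-- The complex conjugate of an `Lᵖ` function. -/
def conjLp {p : ℝ≥0∞} (f : Lp ℂ p hm) : Lp ℂ p hm :=
  MemLp.toLp (fun x => conj (f x))
    (MemLp.of_le (Lp.memLp f)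
      (RCLike.continuous_conj.comp_aestronglyMeasurable (Lp.aestronglyMeasurable f))
      (Eventually.of_forall fun x => by simp))

/-- The embedding of `L^∞` into `L²` (the measure is finite). -/
def inclL2 (f : Linf) : L2 := MemLp.toLp ⇑f ((Lp.memLp f).mono_exponent le_top)

/-- The constant function `1` in `L^∞`. -/
def oneInf : Linf := Lp.const ⊤ hm (1 : ℂ)

/-- The constant function `1` in `L²`. -/
def oneL2 : L2 := Lp.const 2 hm (1 : ℂ)

/-- `f ∈ L^∞` is constant (a.e.). -/
def IsConst (f : Linf) : Prop := ∃ c : ℂ, f = Lp.const ⊤ hm c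

/-- `θ ∈ L^∞` is an inner function: it is analytic (i.e. lies in `H^∞ = H² ∩ L^∞`)
and has modulus `1` a.e. on the circle. -/
structure IsInner (θ : Linf) : Prop where
  analytic : inclL2 θ ∈ H2
  unimodular : ∀ᵐ x ∂hm, ‖θ x‖ = 1

/-- The complementary projection `I - P` of `L²` onto `[H²]^⊥`. -/
def Qm : L2 →L[ℂ] L2 := ContinuousLinearMap.id ℂ L2 - Pp

/-- The Toeplitz operator `T_f h = P (f h)` with symbol `f ∈ L^∞`, realized as the
endomorphism `P M_f P` of `L²` (i.e. extended by zero on `[H²]^⊥`). -/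
def toep (f : Linf) : L2 →L[ℂ] L2 := Pp ∘L mulCL f ∘L Pp

/-- The Hankel operator `H_f h = (I - P)(f h)` with symbol `f ∈ L^∞`, realized as the
operator `(I-P) M_f P` on `L²` (i.e. extended by zero on `[H²]^⊥`). -/
def hank (f : Linf) : L2 →L[ℂ] L2 := Qm ∘L mulCL f ∘L Pp

/-- The operator `S_f h = (I - P)(f h)` on `[H²]^⊥` with symbol `f ∈ L^∞`, realized as
`(I-P) M_f (I-P)` on `L²` (i.e. extended by zero on `H²`). -/
def sop (f : Linf) : L2 →L[ℂ] L2 := Qm ∘L mulCL f ∘L Qm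

/-- The rank one operator `x ⊗ y : h ↦ ⟨h, y⟩ x`. -/
def rankOne (x y : L2) : L2 →L[ℂ] L2 := (innerSL ℂ y).smulRight x

/-- The subspace `θ H²` of `L²`. -/
def thetaH2 (θ : Linf) : Submodule ℂ L2 := H2.map (mulCL θ).toLinearMap

/-- The model space `K_θ = H² ⊖ θH² = H² ∩ (θH²)^⊥`. -/
def Ktheta (θ : Linf) : Submodule ℂ L2 := H2 ⊓ (thetaH2 θ)ᗮ

/-- The orthogonal projection `P_θ` of `L²` onto the model space `K_θ`, given by the
formula `P_θ f = P f - θ P(conj θ · f)`. -/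
def Pth (θ : Linf) : L2 →L[ℂ] L2 := Pp - mulCL θ ∘L Pp ∘L mulCL (conjLp θ)

/-- The truncated Toeplitz operator `A^θ_φ u = P_θ(φ u)` with symbol `φ ∈ L²`, applied to a
bounded function `u` (in the statements, `u` ranges over `K_θ ∩ H^∞`). -/
def ttoepApply (θ : Linf) (φ : L2) (u : Linf) : L2 := Pth θ (mulCL u φ)

/-- The truncated Hankel operator `H^θ_φ u = (I - P_θ)(φ u)` with symbol `φ ∈ L²`, applied to
a bounded function `u` (in the statements, `u` ranges over `K_θ ∩ H^∞`). -/
def thankApply (θ : Linf) (φ : L2) (u : Linf) : L2 := mulCL u φ - Pth θ (mulCL u φ)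

/-- The truncated Toeplitz operator `A^θ_f = P_θ M_f P_θ` with bounded symbol `f ∈ L^∞`,
extended by zero on the orthogonal complement of `K_θ`. -/
def ttoep (θ f : Linf) : L2 →L[ℂ] L2 := Pth θ ∘L mulCL f ∘L Pth θ

/-- The truncated Hankel operator `H^θ_f = (I - P_θ) M_f P_θ` with bounded symbol `f ∈ L^∞`,
extended by zero on the orthogonal complement of `K_θ`. -/
def thank (θ f : Linf) : L2 →L[ℂ] L2 :=
  (ContinuousLinearMap.id ℂ L2 - Pth θ) ∘L mulCL f ∘L Pth θ

/-- The antiunitary operator `V` on `L²`: `(V f)(w) = conj w * conj (f w)`. -/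
def Vop (f : L2) : L2 := mulCL (fourierLp ⊤ (-1)) (conjLp f)

theorem negMP : MeasurePreserving (fun x : Circ => -x) hm hm :=
  Measure.measurePreserving_neg hm

/-- The unitary operator `U` on `L²`: `(U f)(w) = conj w * f (conj w)`. -/
def Uop (f : L2) : L2 :=
  mulCL (fourierLp ⊤ (-1)) (Lp.compMeasurePreserving (fun x : Circ => -x) negMP f)

/-- The normalized reproducing kernel `k_z(w) = √(1-|z|²) / (1 - conj z * w)` of `H²`,
as a continuous function on the circle (`w = e^{ix}`). -/
def kC (z : ℂ) (hz : ‖z‖ < 1) : C(Circ, ℂ) :=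
  ⟨fun x => (Real.sqrt (1 - ‖z‖ ^ 2) : ℂ) / (1 - conj z * fourier 1 x), by
    apply Continuous.div continuous_const
    · exact Continuous.sub continuous_const (Continuous.mul continuous_const (map_continuous _))
    · intro x
      refine sub_ne_zero.2 fun h => absurd (congrArg norm h) ?_
      have h1 : ‖fourier 1 x‖ = 1 := Circle.norm_coe _
      simp only [norm_mul, RCLike.norm_conj, h1, mul_one, norm_one]
      exact fun hc => absurd hc.symm (ne_of_lt hz)⟩

open Classical in
/-- The normalized reproducing kernel `k_z` as an element of `L²` (junk value `0` if `|z| ≥ 1`). -/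
def kLp (z : ℂ) : L2 :=
  if hz : ‖z‖ < 1 then ContinuousMap.toLp 2 hm ℂ (kC z hz) else 0

/-- The Möbius transform `φ_z(w) = (z - w)/(1 - conj z * w)`, as a continuous function. -/
def phiC (z : ℂ) (hz : ‖z‖ < 1) : C(Circ, ℂ) :=
  ⟨fun x => (z - fourier 1 x) / (1 - conj z * fourier 1 x), by
    apply Continuous.div
    · exact Continuous.sub continuous_const (map_continuous _)
    · exact Continuous.sub continuous_const (Continuous.mul continuous_const (map_continuous _))
    · intro x
      refine sub_ne_zero.2 fun h => absurd (congrArg norm h) ?_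
      have h1 : ‖fourier 1 x‖ = 1 := Circle.norm_coe _
      simp only [norm_mul, RCLike.norm_conj, h1, mul_one, norm_one]
      exact fun hc => absurd hc.symm (ne_of_lt hz)⟩

open Classical in
/-- The Möbius transform `φ_z` as an element of `L^∞` (junk value `0` if `|z| ≥ 1`). -/
def phiInf (z : ℂ) : Linf :=
  if hz : ‖z‖ < 1 then ContinuousMap.toLp ⊤ hm ℂ (phiC z hz) else 0

/-- The filter of tangential approach `|z| → 1⁻` inside the unit disk. -/
def toBoundary : Filter ℂ := Filter.comap (fun z => ‖z‖) (𝓝[<] (1 : ℝ))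

/-- Membership in `K_θ + ℂθ = {h ∈ H² : θ conj h ∈ H²}`. -/
def MemKC (θ : Linf) (h : L2) : Prop := h ∈ H2 ∧ mulCL θ (conjLp h) ∈ H2



section Test
open scoped InnerProductSpace
open MeasureTheory HTTO ComplexConjugate

local notation "⟪" x ", " y "⟫" => @inner ℂ _ _ x y

abbrev ee (n : ℤ) : L2 := fourierLp 2 n

lemma inner_ee (f : L2) (n : ℤ) : ⟪ee n, f⟫ = fourierBasis.repr f n := by
  rw [fourierBasis.repr_apply_apply, coe_fourierBasis]

lemma mem_H2_iff {f : L2} : f ∈ H2 ↔ ∀ n : ℤ, n < 0 → ⟪ee n, f⟫ = 0 := by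
  simp only [H2, Submodule.mem_iInf, LinearMap.mem_ker]
  constructor
  · intro h n hn
    rw [inner_ee]
    exact h ⟨n, hn⟩
  · intro h n
    have := h n.1 n.2
    rwa [inner_ee] at this

lemma coeFn_mulCL (u : Linf) (f : L2) : mulCL u f =ᵐ[hm] fun x => u x * f x :=
  coeFn_mulFun u f

lemma coeFn_conjLp {p : ℝ≥0∞} (f : Lp ℂ p hm) : conjLp f =ᵐ[hm] fun x => conj (f x) :=
  MemLp.coeFn_toLp _

lemma coeFn_inclL2 (f : Linf) : inclL2 f =ᵐ[hm] f := MemLp.coeFn_toLp _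

lemma conjLp_conjLp {p : ℝ≥0∞} [Fact (1 ≤ p)] (f : Lp ℂ p hm) : conjLp (conjLp f) = f := by
  apply Lp.ext
  filter_upwards [coeFn_conjLp (conjLp f), coeFn_conjLp f] with x h1 h2
  rw [h1, h2]; simp

lemma inner_mulCL_left (u : Linf) (f g : L2) : ⟪mulCL u f, g⟫ = ⟪f, mulCL (conjLp u) g⟫ := by
  rw [MeasureTheory.L2.inner_def, MeasureTheory.L2.inner_def]
  apply integral_congr_ae
  filter_upwards [coeFn_mulCL u f, coeFn_mulCL (conjLp u) g, coeFn_conjLp u] with x h1 h2 h3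
  simp only [h1, h2, h3, RCLike.inner_apply, map_mul]
  ring

lemma inner_mulCL_right (u : Linf) (f g : L2) : ⟪f, mulCL u g⟫ = ⟪mulCL (conjLp u) f, g⟫ := by
  rw [inner_mulCL_left (conjLp u) f g, conjLp_conjLp]

lemma inner_eq_tsum' (f g : L2) : ⟪f, g⟫ = ∑' n : ℤ, conj ⟪ee n, f⟫ * ⟪ee n, g⟫ := by
  rw [← fourierBasis.repr.inner_map_map f g, lp.inner_eq_tsum]
  congr 1; funext n
  rw [inner_ee, inner_ee, RCLike.inner_apply]
  exact mul_comm _ _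


lemma inner_ee_ee (m n : ℤ) : ⟪ee m, ee n⟫ = if m = n then 1 else 0 := by
  rw [inner_ee, show (ee n : L2) = fourierBasis n from (congrFun coe_fourierBasis n).symm,
    fourierBasis.repr_self, lp.single_apply]
  simp [Pi.single_apply]

lemma parseval_zero (f g : L2) (h : ∀ n : ℤ, conj ⟪ee n, f⟫ * ⟪ee n, g⟫ = 0) :
    ⟪f, g⟫ = 0 := by
  rw [inner_eq_tsum']
  simp only [h, tsum_zero]

lemma Pp_apply (f : L2) : Pp f = (H2.orthogonalProjectionOnto f : L2) := rfl

lemma Pp_mem (f : L2) : Pp f ∈ H2 := (H2.orthogonalProjectionOnto f).2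

lemma Pp_of_mem {f : L2} (hf : f ∈ H2) : Pp f = f :=
  Submodule.starProjection_eq_self_iff.mpr hf

lemma inner_sub_Pp {w : L2} (hw : w ∈ H2) (f : L2) : ⟪w, f - Pp f⟫ = 0 :=
  (Submodule.mem_orthogonal H2 _).mp (Submodule.sub_starProjection_mem_orthogonal f) w hw

lemma oneL2_eq : oneL2 = ee 0 := by
  apply Lp.ext
  unfold oneL2
  filter_upwards [Lp.coeFn_const 2 hm (1:ℂ), coeFn_fourierLp 2 0]
    with x h1 h2
  rw [h1, h2, fourier_zero]; rfl

lemma mulCL_mulCL (u v : Linf) (f : L2) : mulCL u (mulCL v f) = mulCL v (mulCL u f) := by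
  apply Lp.ext
  filter_upwards [coeFn_mulCL u (mulCL v f), coeFn_mulCL v f, coeFn_mulCL v (mulCL u f),
    coeFn_mulCL u f] with x h1 h2 h3 h4
  simp only [h1, h2, h3, h4]; ring

lemma mulCL_fourier (m n : ℤ) : mulCL (fourierLp ⊤ m) (ee n) = ee (m + n) := by
  apply Lp.ext
  filter_upwards [coeFn_mulCL (fourierLp ⊤ m) (ee n), coeFn_fourierLp ⊤ m,
    coeFn_fourierLp 2 n, coeFn_fourierLp 2 (m + n)] with x h1 h2 h3 h4
  rw [h1, h4, fourier_add, h2, h3]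

lemma conjLp_fourier (n : ℤ) : conjLp (fourierLp ⊤ n : Linf) = fourierLp ⊤ (-n) := by
  apply Lp.ext
  filter_upwards [coeFn_conjLp (fourierLp ⊤ n : Linf), coeFn_fourierLp ⊤ n,
    coeFn_fourierLp ⊤ (-n)] with x h1 h2 h3
  rw [h1, h3, fourier_neg, h2]


section Theta
variable {θ : Linf}

lemma mulCL_theta_one : mulCL θ oneL2 = inclL2 θ := by
  apply Lp.ext
  unfold oneL2
  filter_upwards [coeFn_mulCL θ (Lp.const 2 hm (1:ℂ)), Lp.coeFn_const 2 hm (1:ℂ),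
    coeFn_inclL2 θ] with x h1 h2 h3
  rw [h1, h2, h3]; simp [Function.const]

lemma inner_ee_mul_theta (n m : ℤ) : ⟪ee n, mulCL θ (ee m)⟫ = ⟪ee (n - m), inclL2 θ⟫ := by
  have h1 : (ee n : L2) = mulCL (fourierLp ⊤ m) (ee (n - m)) := by
    rw [mulCL_fourier]; congr 1; ring
  rw [h1, inner_mulCL_left, conjLp_fourier]
  congr 1
  rw [mulCL_mulCL, mulCL_fourier, neg_add_cancel, ← oneL2_eq, mulCL_theta_one]

lemma inner_ee_mul_conj_theta (m n : ℤ) :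
    ⟪ee m, mulCL (conjLp θ) (ee n)⟫ = conj ⟪ee (n - m), inclL2 θ⟫ := by
  rw [← inner_conj_symm, inner_mulCL_left, conjLp_conjLp, inner_ee_mul_theta]

lemma Pth_apply (v : L2) : Pth θ v = Pp v - mulCL θ (Pp (mulCL (conjLp θ) v)) := rfl

variable (hθ : IsInner θ)
include hθ

lemma unimod : ∀ᵐ x ∂hm, conj (θ x) * θ x = 1 := by
  filter_upwards [hθ.unimodular] with x hx
  have h2 : Complex.normSq (θ x) = 1 := by
    rw [← Complex.sq_norm, hx, one_pow]
  rw [← Complex.normSq_eq_conj_mul_self, h2, Complex.ofReal_one]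

lemma mulCL_conj_mulCL (f : L2) : mulCL (conjLp θ) (mulCL θ f) = f := by
  apply Lp.ext
  filter_upwards [coeFn_mulCL (conjLp θ) (mulCL θ f), coeFn_mulCL θ f, coeFn_conjLp θ,
    unimod hθ] with x h1 h2 h3 h4
  rw [h1, h2, h3, ← mul_assoc, h4, one_mul]

lemma coeff_theta_neg {n : ℤ} (hn : n < 0) : ⟪ee n, inclL2 θ⟫ = 0 :=
  mem_H2_iff.mp hθ.analytic n hn

lemma P1a {n : ℤ} (hn : n < 0) {h : L2} (hh : h ∈ H2) :
    ⟪mulCL (conjLp θ) (ee n), h⟫ = 0 := by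
  apply parseval_zero
  intro m
  rcases lt_or_ge m 0 with hm | hm
  · rw [mem_H2_iff.mp hh m hm, mul_zero]
  · rw [inner_ee_mul_conj_theta, coeff_theta_neg hθ (by omega), map_zero, map_zero, zero_mul]

lemma P1b {h : L2} (hh : h ∈ H2) :
    ⟪mulCL (conjLp θ) (ee 0), h⟫ = ⟪ee 0, inclL2 θ⟫ * ⟪ee 0, h⟫ := by
  rw [inner_eq_tsum']
  rw [tsum_eq_single 0]
  · rw [inner_ee_mul_conj_theta, sub_zero]
    simp
  · intro m hm
    rcases lt_or_ge m 0 with h1 | h1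
    · rw [mem_H2_iff.mp hh m h1, mul_zero]
    · rw [inner_ee_mul_conj_theta, coeff_theta_neg hθ (by omega), map_zero, map_zero, zero_mul]

lemma mul_theta_mem_H2 {h : L2} (hh : h ∈ H2) : mulCL θ h ∈ H2 := by
  rw [mem_H2_iff]
  intro n hn
  rw [inner_mulCL_right, P1a hθ hn hh]

lemma C1 {n : ℤ} (hn : n < 0) (v : L2) : ⟪ee n, Pth θ v⟫ = 0 := by
  rw [Pth_apply, inner_sub_right, mem_H2_iff.mp (Pp_mem v) n hn,
    mem_H2_iff.mp (mul_theta_mem_H2 hθ (Pp_mem _)) n hn, sub_zero]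

lemma C2 {h : L2} (hh : h ∈ H2) (v : L2) : ⟪mulCL θ h, Pth θ v⟫ = 0 := by
  have hth : mulCL θ h ∈ H2 := mul_theta_mem_H2 hθ hh
  rw [Pth_apply, inner_sub_right, inner_mulCL_left, inner_mulCL_left,
    mulCL_conj_mulCL hθ]
  have e1 : ⟪h, mulCL (conjLp θ) v - mulCL (conjLp θ) (Pp v)⟫ = 0 := by
    rw [← map_sub, inner_mulCL_right, conjLp_conjLp]
    exact inner_sub_Pp hth v
  have e2 : ⟪h, mulCL (conjLp θ) v - Pp (mulCL (conjLp θ) v)⟫ = 0 := inner_sub_Pp hh _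
  rw [inner_sub_right] at e1 e2
  rw [sub_eq_zero]
  rw [sub_eq_zero] at e1 e2
  rw [← e1, ← e2]


omit hθ in
lemma coeFn_mulInf (f g : Linf) : mulInf f g =ᵐ[hm] fun x => f x * g x :=
  MemLp.coeFn_toLp _

/-- `u₀ = 1 - conj a • θ`. -/
def uu (θ : Linf) : Linf := oneInf - (conj ⟪ee 0, inclL2 θ⟫) • θ

/-- `ũ₀ = e₋₁ (θ - a)`. -/
def vv (θ : Linf) : Linf := mulInf (fourierLp ⊤ (-1)) (θ - Lp.const ⊤ hm ⟪ee 0, inclL2 θ⟫)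

omit hθ in
lemma coeFn_uu : ∀ᵐ x ∂hm, (uu θ) x = 1 - conj ⟪ee 0, inclL2 θ⟫ * θ x := by
  unfold uu oneInf
  filter_upwards [Lp.coeFn_sub (Lp.const ⊤ hm (1:ℂ)) ((conj ⟪ee 0, inclL2 θ⟫) • θ),
    Lp.coeFn_smul (conj ⟪ee 0, inclL2 θ⟫) θ, Lp.coeFn_const ⊤ hm (1:ℂ)] with x h1 h2 h3
  rw [h1, Pi.sub_apply, h2, h3]
  rfl

omit hθ in
lemma coeFn_vv : ∀ᵐ x ∂hm,
    (vv θ) x = fourier (-1) x * (θ x - ⟪ee 0, inclL2 θ⟫) := by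
  unfold vv
  filter_upwards [coeFn_mulInf (fourierLp ⊤ (-1)) (θ - Lp.const ⊤ hm ⟪ee 0, inclL2 θ⟫),
    coeFn_fourierLp ⊤ (-1), Lp.coeFn_sub θ (Lp.const ⊤ hm ⟪ee 0, inclL2 θ⟫),
    Lp.coeFn_const ⊤ hm ⟪ee 0, inclL2 θ⟫] with x h1 h2 h3 h4
  rw [h1, h2, h3, Pi.sub_apply, h4]
  rfl

omit hθ in
lemma coeFn_oneL2 : (oneL2 : L2) =ᵐ[hm] fun _ => (1:ℂ) := by
  unfold oneL2
  filter_upwards [Lp.coeFn_const 2 hm (1:ℂ)] with x h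
  rw [h]; rfl

omit hθ in
lemma inclL2_uu : inclL2 (uu θ) = oneL2 - conj ⟪ee 0, inclL2 θ⟫ • inclL2 θ := by
  apply Lp.ext
  filter_upwards [coeFn_inclL2 (uu θ), coeFn_uu (θ := θ),
    Lp.coeFn_sub oneL2 (conj ⟪ee 0, inclL2 θ⟫ • inclL2 θ),
    Lp.coeFn_smul (conj ⟪ee 0, inclL2 θ⟫) (inclL2 θ),
    coeFn_oneL2, coeFn_inclL2 θ] with x h1 h2 h3 h4 h5 h6
  rw [h1, h2, h3, Pi.sub_apply, h4, Pi.smul_apply, h6, h5]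
  rfl

omit hθ in
lemma inclL2_vv : inclL2 (vv θ) =
    mulCL (fourierLp ⊤ (-1)) (inclL2 θ - ⟪ee 0, inclL2 θ⟫ • oneL2) := by
  apply Lp.ext
  filter_upwards [coeFn_inclL2 (vv θ), coeFn_vv (θ := θ),
    coeFn_mulCL (fourierLp ⊤ (-1)) (inclL2 θ - ⟪ee 0, inclL2 θ⟫ • oneL2),
    Lp.coeFn_sub (inclL2 θ) (⟪ee 0, inclL2 θ⟫ • oneL2),
    Lp.coeFn_smul (⟪ee 0, inclL2 θ⟫) oneL2,
    coeFn_oneL2, coeFn_inclL2 θ,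
    coeFn_fourierLp ⊤ (-1)] with x h1 h2 h3 h4 h5 h6 h7 h8
  rw [h1, h2, h3, h4, Pi.sub_apply, h5, Pi.smul_apply, h7, h6, h8]
  simp only [smul_eq_mul, mul_one]

omit hθ in
lemma mul_conj_uu (x : L2) :
    mulCL (conjLp (uu θ)) x = x - ⟪ee 0, inclL2 θ⟫ • mulCL (conjLp θ) x := by
  apply Lp.ext
  filter_upwards [coeFn_mulCL (conjLp (uu θ)) x, coeFn_conjLp (uu θ), coeFn_uu (θ := θ),
    Lp.coeFn_sub x (⟪ee 0, inclL2 θ⟫ • mulCL (conjLp θ) x),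
    Lp.coeFn_smul (⟪ee 0, inclL2 θ⟫) (mulCL (conjLp θ) x),
    coeFn_mulCL (conjLp θ) x, coeFn_conjLp θ] with y h1 h2 h3 h4 h5 h6 h7
  rw [h1, h2, h3, h4, Pi.sub_apply, h5, Pi.smul_apply, h6, h7]
  simp only [map_sub, map_mul, map_one, Complex.conj_conj, smul_eq_mul]
  ring

omit hθ in
lemma mul_conj_vv (x : L2) :
    mulCL (conjLp (vv θ)) x = mulCL (fourierLp ⊤ 1) (mulCL (conjLp θ) x)
      - conj ⟪ee 0, inclL2 θ⟫ • mulCL (fourierLp ⊤ 1) x := by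
  apply Lp.ext
  filter_upwards [coeFn_mulCL (conjLp (vv θ)) x, coeFn_conjLp (vv θ), coeFn_vv (θ := θ),
    coeFn_mulCL (fourierLp ⊤ 1) (mulCL (conjLp θ) x),
    coeFn_mulCL (conjLp θ) x, coeFn_conjLp θ,
    Lp.coeFn_sub (mulCL (fourierLp ⊤ 1) (mulCL (conjLp θ) x))
      (conj ⟪ee 0, inclL2 θ⟫ • mulCL (fourierLp ⊤ 1) x),
    Lp.coeFn_smul (conj ⟪ee 0, inclL2 θ⟫) (mulCL (fourierLp ⊤ 1) x),
    coeFn_mulCL (fourierLp ⊤ 1) x, coeFn_fourierLp ⊤ 1]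
    with y h1 h2 h3 h4 h5 h6 h7 h8 h9 h10
  rw [h1, h2, h3, h7, Pi.sub_apply, h4, h5, h6, h8, Pi.smul_apply, h9, h10]
  have hc : conj ((fourier (-1)) y) = (fourier 1) y := by
    rw [fourier_neg, Complex.conj_conj]
  simp only [map_mul, map_sub, hc, smul_eq_mul]
  ring


omit hθ in
lemma oneL2_mem : (oneL2 : L2) ∈ H2 := by
  rw [mem_H2_iff]
  intro n hn
  rw [oneL2_eq, inner_ee_ee, if_neg (by omega)]

omit hθ in
lemma ee_mem {n : ℤ} (hn : 0 ≤ n) : (ee n : L2) ∈ H2 := by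
  rw [mem_H2_iff]
  intro m hm
  rw [inner_ee_ee, if_neg (by omega)]

lemma uu_mem : inclL2 (uu θ) ∈ Ktheta θ := by
  rw [Ktheta, Submodule.mem_inf]
  constructor
  · rw [inclL2_uu]
    exact H2.sub_mem oneL2_mem (H2.smul_mem _ hθ.analytic)
  · rw [Submodule.mem_orthogonal]
    rintro x hx
    obtain ⟨h, hh, rfl⟩ := hx
    show ⟪mulCL θ h, inclL2 (uu θ)⟫ = 0
    rw [inclL2_uu, inner_sub_right, inner_smul_right]
    have t1 : ⟪mulCL θ h, oneL2⟫ = conj (⟪ee 0, inclL2 θ⟫ * ⟪ee 0, h⟫) := by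
      rw [oneL2_eq, inner_mulCL_left, ← inner_conj_symm, P1b hθ hh]
    have t2 : ⟪mulCL θ h, inclL2 θ⟫ = conj ⟪ee 0, h⟫ := by
      conv_lhs => rw [← mulCL_theta_one (θ := θ)]
      rw [inner_mulCL_left, mulCL_conj_mulCL hθ, oneL2_eq, ← inner_conj_symm]
    rw [t1, t2, map_mul]
    ring

lemma vv_mem : inclL2 (vv θ) ∈ Ktheta θ := by
  rw [Ktheta, Submodule.mem_inf]
  have hshift : ∀ y : L2, ⟪ee (-1 : ℤ), y⟫ = ⟪mulCL (conjLp (fourierLp ⊤ 1)) (ee 0), y⟫ := by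
    intro y
    rw [conjLp_fourier, mulCL_fourier]
    norm_num
  constructor
  · rw [mem_H2_iff]
    intro n hn
    rw [inclL2_vv, inner_mulCL_right, conjLp_fourier, neg_neg, mulCL_fourier,
      inner_sub_right, inner_smul_right, oneL2_eq, inner_ee_ee]
    rcases eq_or_lt_of_le (show n ≤ -1 by omega) with h1 | h1
    · subst h1
      norm_num
    · rw [coeff_theta_neg hθ (by omega), if_neg (by omega), mul_zero, sub_zero]
  · rw [Submodule.mem_orthogonal]
    rintro x hx
    obtain ⟨h, hh, rfl⟩ := hx
    show ⟪mulCL θ h, inclL2 (vv θ)⟫ = 0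
    rw [← inner_conj_symm, inclL2_vv, inner_mulCL_left, conjLp_fourier, neg_neg,
      inner_sub_left, inner_smul_left]
    have t1 : ⟪inclL2 θ, mulCL (fourierLp ⊤ 1) (mulCL θ h)⟫ = 0 := by
      conv_lhs => rw [← mulCL_theta_one (θ := θ)]
      rw [inner_mulCL_left, mulCL_mulCL, mulCL_conj_mulCL hθ, oneL2_eq,
        inner_mulCL_right, conjLp_fourier, mulCL_fourier]
      norm_num
      exact mem_H2_iff.mp hh (-1) (by omega)
    have t2 : ⟪(oneL2 : L2), mulCL (fourierLp ⊤ 1) (mulCL θ h)⟫ = 0 := by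
      rw [oneL2_eq, inner_mulCL_right, conjLp_fourier, mulCL_fourier]
      norm_num
      exact mem_H2_iff.mp (mul_theta_mem_H2 hθ hh) (-1) (by omega)
    rw [t1, t2, mul_zero, sub_zero, map_zero]

omit hθ in
lemma norm_ee_zero : ‖(ee 0 : L2)‖ = 1 := by
  have h := (fourierBasis (T := 2 * Real.pi)).orthonormal.1 (0 : ℤ)
  rwa [show (fourierBasis (T := 2 * Real.pi)) (0:ℤ) = ee 0 from congrFun coe_fourierBasis 0] at h

lemma coeff0_lt_one (hθnc : ¬ IsConst θ) : ‖⟪ee 0, inclL2 θ⟫‖ < 1 := by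
  set a : ℂ := ⟪ee 0, inclL2 θ⟫ with ha
  have hT : ‖inclL2 θ‖ = 1 := by
    unfold inclL2
    rw [Lp.norm_toLp]
    have h1 : eLpNorm (⇑θ) 2 hm = 1 := by
      rw [eLpNorm_congr_norm_ae (g := fun _ : Circ => (1:ℂ))
        (by filter_upwards [hθ.unimodular] with x hx; simpa using hx)]
      rw [eLpNorm_const (1:ℂ) (by norm_num) (IsProbabilityMeasure.ne_zero hm)]
      simp
    rw [h1]; simp
  have hinner : ⟪a • (ee 0 : L2), inclL2 θ - a • ee 0⟫ = 0 := by
    rw [inner_smul_left, inner_sub_right, inner_smul_right, inner_ee_ee, ← ha]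
    simp
  have hsum : a • (ee 0 : L2) + (inclL2 θ - a • ee 0) = inclL2 θ := by abel
  have key := norm_add_sq_eq_norm_sq_add_norm_sq_of_inner_eq_zero _ _ hinner
  rw [hsum, hT, norm_smul, norm_ee_zero] at key
  by_contra hcon
  push_neg at hcon
  have hr0 : inclL2 θ - a • ee 0 = 0 := by
    have h3 := norm_nonneg (inclL2 θ - a • (ee 0 : L2))
    have h2 : ‖inclL2 θ - a • (ee 0 : L2)‖ = 0 := by nlinarith [norm_nonneg a]
    exact norm_eq_zero.mp h2
  apply hθnc
  refine ⟨a, ?_⟩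
  have heq : inclL2 θ = a • ee 0 := by
    rw [sub_eq_zero] at hr0; exact hr0
  apply Lp.ext
  have hae : (inclL2 θ : L2) =ᵐ[hm] ⇑(a • (ee 0 : L2)) := by rw [heq]
  filter_upwards [coeFn_inclL2 θ, hae, Lp.coeFn_smul a (ee 0 : L2), coeFn_fourierLp 2 0,
    Lp.coeFn_const ⊤ hm a] with x h1 h2 h3 h4 h5
  rw [← h1, h2, h3, Pi.smul_apply, h4, fourier_zero, h5]
  simp


end Theta

theorem statement_1' (θ : Linf) (hθ : IsInner θ) (hθnc : ¬ IsConst θ) (φ : L2) :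
    (∀ u : Linf, inclL2 u ∈ Ktheta θ → thankApply θ φ u = 0) ↔
      ∃ c : ℂ, φ = Lp.const 2 hm c := by
  constructor
  · intro hyp
    set a : ℂ := ⟪ee 0, inclL2 θ⟫ with ha
    have heq : ∀ u : Linf, inclL2 u ∈ Ktheta θ → mulCL u φ = Pth θ (mulCL u φ) := by
      intro u hu
      have h := hyp u hu
      unfold thankApply at h
      rwa [sub_eq_zero] at h
    have hu := heq (uu θ) (uu_mem hθ)
    have hv := heq (vv θ) (vv_mem hθ)
    have E1 : ∀ n : ℤ, n < 0 →
        ⟪(ee n : L2), φ⟫ = conj a * ⟪mulCL (conjLp θ) (ee n), φ⟫ := by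
      intro n hn
      have h0 : ⟪(ee n : L2), mulCL (uu θ) φ⟫ = 0 := by rw [hu]; exact C1 hθ hn _
      rw [inner_mulCL_right, mul_conj_uu, inner_sub_left, inner_smul_left, ← ha] at h0
      exact sub_eq_zero.mp h0
    have E2 : ∀ k : ℤ, 0 ≤ k →
        ⟪mulCL θ (ee k), φ⟫ = conj a * ⟪(ee k : L2), φ⟫ := by
      intro k hk
      have h0 : ⟪mulCL θ (ee k), mulCL (uu θ) φ⟫ = 0 := by
        rw [hu]; exact C2 hθ (ee_mem hk) _
      rw [inner_mulCL_right, mul_conj_uu, mulCL_conj_mulCL hθ, inner_sub_left,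
        inner_smul_left, ← ha] at h0
      exact sub_eq_zero.mp h0
    have E3 : ∀ n : ℤ, n < 0 →
        ⟪mulCL (conjLp θ) (ee (1 + n)), φ⟫ = a * ⟪(ee (1 + n) : L2), φ⟫ := by
      intro n hn
      have h0 : ⟪(ee n : L2), mulCL (vv θ) φ⟫ = 0 := by rw [hv]; exact C1 hθ hn _
      rw [inner_mulCL_right, mul_conj_vv, mulCL_mulCL, mulCL_fourier, inner_sub_left,
        inner_smul_left, Complex.conj_conj, ← ha] at h0
      exact sub_eq_zero.mp h0
    have E4 : ∀ k : ℤ, 0 ≤ k →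
        ⟪(ee (1 + k) : L2), φ⟫ = a * ⟪mulCL θ (ee (1 + k)), φ⟫ := by
      intro k hk
      have h0 : ⟪mulCL θ (ee k), mulCL (vv θ) φ⟫ = 0 := by
        rw [hv]; exact C2 hθ (ee_mem hk) _
      rw [inner_mulCL_right, mul_conj_vv, mulCL_conj_mulCL hθ,
        mulCL_mulCL (fourierLp ⊤ 1) θ (ee k), mulCL_fourier, inner_sub_left,
        inner_smul_left, Complex.conj_conj, ← ha] at h0
      exact sub_eq_zero.mp h0
    have hne : (1 : ℂ) - conj a * a ≠ 0 := by
      intro hcc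
      have h1 : conj a * a = 1 := by linear_combination -hcc
      have h2 : Complex.normSq a = 1 := by
        have hh := Complex.normSq_eq_conj_mul_self (z := a)
        rw [h1] at hh
        exact_mod_cast hh
      have h3 : ‖a‖ ^ 2 = 1 := by
        rw [← Complex.sq_norm] at h2
        exact_mod_cast h2
      have h4 := coeff0_lt_one hθ hθnc
      rw [← ha] at h4
      nlinarith [norm_nonneg a]
    have hzero : ∀ m : ℤ, m ≠ 0 → ⟪(ee m : L2), φ⟫ = 0 := by
      intro m hm
      rcases lt_or_gt_of_ne hm with hml | hmg
      · have e1 := E1 m hml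
        have e3 := E3 (m - 1) (by omega)
        rw [show (1 + (m - 1) : ℤ) = m by ring] at e3
        rw [e3] at e1
        have hmul : ((1 : ℂ) - conj a * a) * ⟪(ee m : L2), φ⟫ = 0 := by
          linear_combination e1
        rcases mul_eq_zero.mp hmul with h | h
        · exact absurd h hne
        · exact h
      · have e4 := E4 (m - 1) (by omega)
        rw [show (1 + (m - 1) : ℤ) = m by ring] at e4
        rw [E2 m (by omega)] at e4
        have hmul : ((1 : ℂ) - conj a * a) * ⟪(ee m : L2), φ⟫ = 0 := by
          linear_combination e4
        rcases mul_eq_zero.mp hmul with h | h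
        · exact absurd h hne
        · exact h
    refine ⟨⟪(ee 0 : L2), φ⟫, ?_⟩
    have hins : ∀ n : ℤ, ⟪(ee n : L2), φ - ⟪(ee 0 : L2), φ⟫ • ee 0⟫ = 0 := by
      intro n
      rw [inner_sub_right, inner_smul_right, inner_ee_ee]
      by_cases hn : n = 0
      · subst hn; simp
      · rw [if_neg hn, mul_zero, sub_zero]
        exact hzero n hn
    have hpsi : φ - ⟪(ee 0 : L2), φ⟫ • ee 0 = 0 := by
      have h2 : ⟪φ - ⟪(ee 0 : L2), φ⟫ • (ee 0 : L2),
          φ - ⟪(ee 0 : L2), φ⟫ • (ee 0 : L2)⟫ = 0 :=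
        parseval_zero _ _ (fun n => by rw [hins n, mul_zero])
      exact inner_self_eq_zero.mp h2
    have hphi : φ = ⟪(ee 0 : L2), φ⟫ • (ee 0 : L2) := by rwa [sub_eq_zero] at hpsi
    apply Lp.ext
    have hae : ⇑φ =ᵐ[hm] ⇑(⟪(ee 0 : L2), φ⟫ • (ee 0 : L2)) := by rw [← hphi]
    filter_upwards [hae, Lp.coeFn_smul (⟪(ee 0 : L2), φ⟫) (ee 0 : L2), coeFn_fourierLp 2 0,
      Lp.coeFn_const 2 hm (⟪(ee 0 : L2), φ⟫)] with x h1 h2 h3 h4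
    rw [h1, h2, Pi.smul_apply, h3, fourier_zero, h4]
    simp
  · rintro ⟨c, rfl⟩ u hu
    unfold thankApply
    rw [sub_eq_zero]
    have h1 : mulCL u (Lp.const 2 hm c) = c • inclL2 u := by
      apply Lp.ext
      filter_upwards [coeFn_mulCL u (Lp.const 2 hm c), Lp.coeFn_const 2 hm c,
        Lp.coeFn_smul c (inclL2 u), coeFn_inclL2 u] with x g1 g2 g3 g4
      rw [g1, g2, g3, Pi.smul_apply, g4]
      simp [mul_comm]
    rw [h1, _root_.map_smul]
    congr 1
    rw [Ktheta, Submodule.mem_inf] at hu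
    obtain ⟨hu1, hu2⟩ := hu
    have h2 : Pp (mulCL (conjLp θ) (inclL2 u)) = 0 := by
      have hmem : mulCL (conjLp θ) (inclL2 u) ∈ H2ᗮ := by
        rw [Submodule.mem_orthogonal]
        intro w hw
        rw [inner_mulCL_right, conjLp_conjLp]
        exact (Submodule.mem_orthogonal _ _).mp hu2 _ (Submodule.mem_map_of_mem hw)
      rw [Pp_apply, Submodule.orthogonalProjectionOnto_apply_of_mem_orthogonal hmem]
      rfl
    rw [Pth_apply, Pp_of_mem hu1, h2, map_zero, sub_zero]

end Test
/-- For a non-constant inner function `θ` and `φ ∈ L²`, the truncated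
Hankel operator `H^θ_φ` vanishes on the dense subset `K_θ ∩ H^∞` of `K_θ` if and only if
`φ` is constant a.e. on the circle. -/
theorem statement_1 (θ : Linf) (hθ : IsInner θ) (hθnc : ¬ IsConst θ) (φ : L2) :
    (∀ u : Linf, inclL2 u ∈ Ktheta θ → thankApply θ φ u = 0) ↔
      ∃ c : ℂ, φ = Lp.const 2 hm c := by
  exact statement_1' θ hθ hθnc φ

end HTTO
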